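/- Eckart–Young for symmetric matrices: if R is symmetric with spectral decomposition R = Σ λ_i x_i x_iᵀ where |λ_1| ≥ ... ≥ |λ_N|, then the best rank-k approximation of R in Frobenius norm is Σ_{i≤k} λ_i x_i x_iᵀ, with error √(Σ_{i>k} λ_i²). -/

import Mathlib

/-!
Let `Q` be the orthogonal projection onto the column space of `P`, of dimension at most `k`.
Since `P xᵢ` lies in that space, `‖(P - R) xᵢ‖² = ‖P xᵢ - λᵢ xᵢ‖² ≥ λᵢ² (1 - tᵢ)` with
`tᵢ = ‖Q xᵢ‖² ∈ [0, 1]`, and Bessel's inequality against an orthonormal basis of the column space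
gives `∑ tᵢ ≤ k`; Bessel's inequality for the rows of `P - R` gives `∑ ‖(P - R) xᵢ‖² ≤ ‖P - R‖²_F`.
Under these constraints `∑ λᵢ² (1 - tᵢ)` is smallest when the weight `tᵢ = 1` sits on the `k`
largest `|λᵢ|`, which leaves `∑_{i ≥ k} λᵢ²`. The truncation differs from `R` by
`∑_{i ≥ k} λᵢ xᵢ xᵢᵀ`, whose Frobenius norm orthonormality computes exactly.
-/

open Matrix

/-- Frobenius norm of a real matrix. -/
noncomputable def frobNorm {N : ℕ} (M : Matrix (Fin N) (Fin N) ℝ) : ℝ :=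
  Real.sqrt (∑ i, ∑ j, (M i j) ^ 2)

open Finset

section InnerProductSpace

variable {𝕜 E : Type*} [RCLike 𝕜] [NormedAddCommGroup E] [InnerProductSpace 𝕜 E]

theorem Submodule.norm_sq_sub_norm_sq_starProjection_le (K : Submodule 𝕜 E)
    [K.HasOrthogonalProjection] (v : E) {w : E} (hw : w ∈ K) :
    ‖v‖ ^ 2 - ‖K.starProjection v‖ ^ 2 ≤ ‖v - w‖ ^ 2 := by
  have hmin : ‖v - K.starProjection v‖ ≤ ‖v - w‖ := by
    rw [K.starProjection_minimal]
    exact ciInf_le ⟨0, Set.forall_mem_range.mpr fun _ => norm_nonneg _⟩ (⟨w, hw⟩ : K)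
  have hpyth := K.norm_sq_eq_add_norm_sq_starProjection v
  rw [K.starProjection_orthogonal'] at hpyth
  simp only [_root_.sub_apply, one_apply_eq_self] at hpyth
  nlinarith [norm_nonneg (v - K.starProjection v)]

theorem Orthonormal.sum_norm_sq_starProjection_le_finrank {ι : Type*} [Fintype ι] {v : ι → E}
    (hv : Orthonormal 𝕜 v) (K : Submodule 𝕜 E) [FiniteDimensional 𝕜 K] :
    ∑ i, ‖K.starProjection (v i)‖ ^ 2 ≤ Module.finrank 𝕜 K := by
  let b := stdOrthonormalBasis 𝕜 K
  have hparseval (y : E) : ‖K.starProjection y‖ ^ 2 = ∑ s, ‖inner 𝕜 (b s : E) y‖ ^ 2 := by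
    rw [K.starProjection_apply, Submodule.norm_coe, ← b.sum_sq_norm_inner_right]
    refine sum_congr rfl fun s _ => ?_
    rw [Submodule.coe_inner, ← K.starProjection_apply, ← K.inner_starProjection_left_eq_right,
      K.starProjection_eq_self_iff.mpr (b s).2]
  calc ∑ i, ‖K.starProjection (v i)‖ ^ 2 = ∑ s, ∑ i, ‖inner 𝕜 (v i) (b s : E)‖ ^ 2 := by
        simp_rw [hparseval, norm_inner_symm (b _ : E)]
        exact Finset.sum_comm
    _ ≤ ∑ s, ‖(b s : E)‖ ^ 2 := sum_le_sum fun s _ => hv.sum_inner_products_le _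
    _ = Module.finrank 𝕜 K := by simp [Submodule.norm_coe, b.orthonormal.1 _]

end InnerProductSpace

theorem Antitone.sum_filter_le_sum_mul_one_sub {n k : ℕ} {a t : Fin n → ℝ} (ha : Antitone a)
    (ha0 : ∀ i, 0 ≤ a i) (ht0 : ∀ i, 0 ≤ t i) (ht1 : ∀ i, t i ≤ 1) (hsum : ∑ i, t i ≤ k) :
    ∑ i ∈ {i : Fin n | k ≤ (i : ℕ)}, a i ≤ ∑ i, a i * (1 - t i) := by
  have hsplit (f : Fin n → ℝ) :
      ∑ i, f i = ∑ i ∈ {i : Fin n | (i : ℕ) < k}, f i + ∑ i ∈ {i : Fin n | k ≤ (i : ℕ)}, f i := by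
    simp_rw [← not_lt]
    exact (sum_filter_add_sum_filter_not _ _ _).symm
  suffices ∑ i ∈ {i : Fin n | k ≤ (i : ℕ)}, a i * t i
      ≤ ∑ i ∈ {i : Fin n | (i : ℕ) < k}, a i * (1 - t i) by
    have htail : ∑ i ∈ {i : Fin n | k ≤ (i : ℕ)}, a i
        = ∑ i ∈ {i : Fin n | k ≤ (i : ℕ)}, (a i * (1 - t i) + a i * t i) :=
      sum_congr rfl fun i _ => by ring
    rw [hsplit, htail, sum_add_distrib]
    linarith
  rcases lt_or_ge k n with hk | hk
  · -- `c := a k` separates the values of `a` on the head from those on the tail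
    set c := a ⟨k, hk⟩
    have hhead : #{i : Fin n | (i : ℕ) < k} = k := by simp [Fin.card_filter_val_lt, hk.le]
    calc ∑ i ∈ {i : Fin n | k ≤ (i : ℕ)}, a i * t i
        ≤ ∑ i ∈ {i : Fin n | k ≤ (i : ℕ)}, c * t i :=
          sum_le_sum fun i hi =>
            mul_le_mul_of_nonneg_right (ha (by simpa [Fin.le_def] using hi)) (ht0 i)
      _ ≤ ∑ i ∈ {i : Fin n | (i : ℕ) < k}, c * (1 - t i) := by
          rw [← mul_sum, ← mul_sum, sum_sub_distrib, sum_const, hhead, nsmul_one]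
          exact mul_le_mul_of_nonneg_left (by linarith [hsplit t]) (ha0 _)
      _ ≤ ∑ i ∈ {i : Fin n | (i : ℕ) < k}, a i * (1 - t i) :=
          sum_le_sum fun i hi => mul_le_mul_of_nonneg_right
            (ha (Fin.le_def.mpr (by simpa using (mem_filter.mp hi).2.le))) (by linarith [ht1 i])
  · rw [filter_false_of_mem fun i _ => by omega, sum_empty]
    exact sum_nonneg fun i _ => mul_nonneg (ha0 i) (by linarith [ht1 i])

theorem Orthonormal.sum_sq_filter_le_sum_norm_sub_sq {E : Type*} [NormedAddCommGroup E]
    [InnerProductSpace ℝ E] {n k : ℕ} {v : Fin n → E} (hv : Orthonormal ℝ v) {lam : Fin n → ℝ}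
    (hlam : ∀ i j, i ≤ j → |lam j| ≤ |lam i|) (K : Submodule ℝ E) [FiniteDimensional ℝ K]
    (hK : Module.finrank ℝ K ≤ k) {w : Fin n → E} (hw : ∀ i, w i ∈ K) :
    ∑ i ∈ {i : Fin n | k ≤ (i : ℕ)}, lam i ^ 2 ≤ ∑ i, ‖w i - lam i • v i‖ ^ 2 := by
  set t := fun i => ‖K.starProjection (v i)‖ ^ 2
  have ht1 (i : Fin n) : t i ≤ 1 := by
    simpa [t, hv.1 i] using
      pow_le_pow_left₀ (norm_nonneg _) (K.norm_starProjection_apply_le (v i)) 2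
  have hsum : ∑ i, t i ≤ k :=
    (hv.sum_norm_sq_starProjection_le_finrank K).trans (by exact_mod_cast hK)
  have hcol (i : Fin n) : lam i ^ 2 * (1 - t i) ≤ ‖w i - lam i • v i‖ ^ 2 := by
    have := K.norm_sq_sub_norm_sq_starProjection_le (lam i • v i) (hw i)
    rw [map_smul, norm_smul, norm_smul, hv.1 i, norm_sub_rev] at this
    simp only [t, Real.norm_eq_abs, mul_pow, sq_abs] at this ⊢
    linarith
  calc ∑ i ∈ {i : Fin n | k ≤ (i : ℕ)}, lam i ^ 2 ≤ ∑ i, lam i ^ 2 * (1 - t i) :=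
        Antitone.sum_filter_le_sum_mul_one_sub (fun i j hij => sq_le_sq.mpr (hlam i j hij))
          (fun i => sq_nonneg _) (fun i => sq_nonneg _) ht1 hsum
    _ ≤ ∑ i, ‖w i - lam i • v i‖ ^ 2 := sum_le_sum fun i _ => hcol i

theorem Matrix.sum_norm_sq_toLpLin_le {m n ι : Type*} [Fintype m] [Fintype n] [DecidableEq n]
    [Fintype ι] (M : Matrix m n ℝ) {v : ι → EuclideanSpace ℝ n} (hv : Orthonormal ℝ v) :
    ∑ i, ‖toLpLin 2 2 M (v i)‖ ^ 2 ≤ ∑ a, ∑ b, M a b ^ 2 := by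
  calc ∑ i, ‖toLpLin 2 2 M (v i)‖ ^ 2
        = ∑ a, ∑ i, ‖inner ℝ (v i) (WithLp.toLp 2 (M a))‖ ^ 2 := by
        simp only [EuclideanSpace.real_norm_sq_eq, toLpLin_apply, Real.norm_eq_abs, sq_abs]
        rw [sum_comm]
        rfl
    _ ≤ ∑ a, ‖WithLp.toLp 2 (M a)‖ ^ 2 := sum_le_sum fun a _ => hv.sum_inner_products_le _
    _ = ∑ a, ∑ b, M a b ^ 2 := by simp only [EuclideanSpace.real_norm_sq_eq]

theorem Matrix.sum_smul_vecMulVec_mulVec {n ι : Type*} [Fintype n] [Fintype ι] [DecidableEq ι]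
    {x : ι → n → ℝ} (hx : ∀ i j, x i ⬝ᵥ x j = if i = j then 1 else 0) (c : ι → ℝ) (j : ι) :
    (∑ i, c i • vecMulVec (x i) (x i)) *ᵥ x j = c j • x j := by
  simp [sum_mulVec, smul_mulVec, vecMulVec_mulVec, hx]

theorem frobNorm_sub_comm {N : ℕ} (A B : Matrix (Fin N) (Fin N) ℝ) :
    frobNorm (A - B) = frobNorm (B - A) := by
  simp only [frobNorm, Matrix.sub_apply, sub_sq_comm]

theorem frobNorm_sum_smul_vecMulVec {N : ℕ} {ι : Type*} {x : ι → Fin N → ℝ}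
    (hx : Orthonormal ℝ fun i => WithLp.toLp 2 (x i)) (s : Finset ι) (c : ι → ℝ) :
    frobNorm (∑ i ∈ s, c i • vecMulVec (x i) (x i)) = √(∑ i ∈ s, c i ^ 2) := by
  have hrow (a : Fin N) : ∑ b, (∑ i ∈ s, c i • vecMulVec (x i) (x i)) a b ^ 2
      = ∑ i ∈ s, (c i * x i a) ^ 2 := by
    have := hx.inner_sum (fun i => c i * x i a) (fun i => c i * x i a) s
    rw [real_inner_self_eq_norm_sq, EuclideanSpace.real_norm_sq_eq] at this
    simpa [Matrix.sum_apply, vecMulVec_apply, mul_assoc, sq] using this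
  have hnorm (i : ι) : ∑ a, x i a ^ 2 = 1 := by
    simpa [hx.1 i] using (EuclideanSpace.real_norm_sq_eq (WithLp.toLp 2 (x i))).symm
  rw [frobNorm]
  congr 1
  simp_rw [hrow, mul_pow]
  rw [sum_comm]
  simp [← mul_sum, hnorm]

theorem eckart_young_symmetric {N k : ℕ}
    (x : Fin N → (Fin N → ℝ)) (lam : Fin N → ℝ)
    (horth : ∀ i j : Fin N, x i ⬝ᵥ x j = if i = j then 1 else 0)
    (hsort : ∀ i j : Fin N, i ≤ j → |lam j| ≤ |lam i|)
    (R : Matrix (Fin N) (Fin N) ℝ)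
    (hR : R = ∑ i, lam i • Matrix.vecMulVec (x i) (x i)) :
    (∀ P : Matrix (Fin N) (Fin N) ℝ, P.rank ≤ k →
      Real.sqrt (∑ i ∈ Finset.univ.filter (fun i : Fin N => k ≤ (i : ℕ)), (lam i) ^ 2)
        ≤ frobNorm (P - R)) ∧
    frobNorm ((∑ i ∈ Finset.univ.filter (fun i : Fin N => (i : ℕ) < k),
        lam i • Matrix.vecMulVec (x i) (x i)) - R) =
      Real.sqrt (∑ i ∈ Finset.univ.filter (fun i : Fin N => k ≤ (i : ℕ)), (lam i) ^ 2) := by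
  set v : Fin N → EuclideanSpace ℝ (Fin N) := fun i => WithLp.toLp 2 (x i)
  have hv : Orthonormal ℝ v :=
    orthonormal_iff_ite.mpr fun i j => by
      simpa [v, EuclideanSpace.inner_toLp_toLp, dotProduct_comm] using horth i j
  refine ⟨fun P hP => Real.sqrt_le_sqrt ?_, ?_⟩
  · have hRv (i : Fin N) : toLpLin 2 2 R (v i) = lam i • v i := by
      rw [toLpLin_toLp, toLin'_apply, hR, sum_smul_vecMulVec_mulVec horth]
      rfl
    have hK : Module.finrank ℝ (LinearMap.range (toLpLin 2 2 P)) ≤ k := by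
      rwa [toLpLin_eq_toLin, ← rank_eq_finrank_range_toLin]
    calc ∑ i ∈ {i : Fin N | k ≤ (i : ℕ)}, lam i ^ 2
        ≤ ∑ i, ‖toLpLin 2 2 P (v i) - lam i • v i‖ ^ 2 :=
          hv.sum_sq_filter_le_sum_norm_sub_sq hsort _ hK fun i => LinearMap.mem_range_self _ _
      _ = ∑ i, ‖toLpLin 2 2 (P - R) (v i)‖ ^ 2 := by
          simp only [map_sub, LinearMap.sub_apply, hRv]
      _ ≤ ∑ a, ∑ b, (P - R) a b ^ 2 := (P - R).sum_norm_sq_toLpLin_le hv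
  · have htail : R - ∑ i ∈ {i : Fin N | (i : ℕ) < k}, lam i • vecMulVec (x i) (x i)
        = ∑ i ∈ {i : Fin N | k ≤ (i : ℕ)}, lam i • vecMulVec (x i) (x i) := by
      rw [hR, ← sum_filter_add_sum_filter_not univ (fun i : Fin N => (i : ℕ) < k)]
      simp_rw [not_lt, add_sub_cancel_left]
    rw [frobNorm_sub_comm, htail, frobNorm_sum_smul_vecMulVec hv]
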